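/- An infinite group generated by two distinct nontrivial involutions is isomorphic to the group D∞ of distance-preserving permutations of ℤ. -/
import Mathlib


/-- The infinite dihedral group `D∞` as the subgroup of distance-preserving
permutations of `ℤ`. -/
def Dinf : Subgroup (Equiv.Perm ℤ) where
  carrier := {s | ∀ i j : ℤ, |s i - s j| = |i - j|}
  mul_mem' := by
    intro a b ha hb i j
    simp only [Set.mem_setOf_eq, Equiv.Perm.mul_apply] at *
    rw [ha, hb]
  one_mem' := by intro i j; simp
  inv_mem' := by
    intro a ha i j
    have := (ha (a⁻¹ i) (a⁻¹ j)).symm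
    simpa using this

lemma dinf_classify (s : Equiv.Perm ℤ) (hs : s ∈ Dinf) :
    (∀ i, s i = s 0 + i) ∨ (∀ i, s i = s 0 - i) := by
  have h1 := abs_eq_abs.mp (hs 1 0)
  rcases h1 with hd | hd
  · left; intro i
    have a := abs_eq_abs.mp (hs i 0)
    have b := abs_eq_abs.mp (hs i 1)
    omega
  · right; intro i
    have a := abs_eq_abs.mp (hs i 0)
    have b := abs_eq_abs.mp (hs i 1)
    omega

lemma rho_mem (c : ℤ) : Equiv.subLeft c ∈ Dinf := by
  intro i j
  simp only [Equiv.subLeft_apply]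
  have : (c - i) - (c - j) = -(i - j) := by ring
  rw [this, abs_neg]

section Psi

variable {G : Type*} [Group G] (α t : G)

/-- The candidate isomorphism `Dinf → G`. -/
def psi : Dinf → G := fun s =>
  if (s : Equiv.Perm ℤ) 1 - (s : Equiv.Perm ℤ) 0 = 1
  then t ^ ((s : Equiv.Perm ℤ) 0)
  else t ^ ((s : Equiv.Perm ℤ) 0) * α

lemma psi_one : psi α t 1 = 1 := by
  simp [psi]

lemma psi_trans (s : Dinf) (hs : ∀ i, (s : Equiv.Perm ℤ) i = (s : Equiv.Perm ℤ) 0 + i) :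
    psi α t s = t ^ ((s : Equiv.Perm ℤ) 0) := by
  have hc : (s : Equiv.Perm ℤ) 1 - (s : Equiv.Perm ℤ) 0 = 1 := by rw [hs 1]; ring
  unfold psi
  rw [if_pos hc]

lemma psi_refl (s : Dinf) (hs : ∀ i, (s : Equiv.Perm ℤ) i = (s : Equiv.Perm ℤ) 0 - i) :
    psi α t s = t ^ ((s : Equiv.Perm ℤ) 0) * α := by
  have hc : ¬ ((s : Equiv.Perm ℤ) 1 - (s : Equiv.Perm ℤ) 0 = 1) := by rw [hs 1]; omega
  unfold psi
  rw [if_neg hc]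

lemma psi_mul (hconj : ∀ n : ℤ, α * t ^ n * α = t ^ (-n)) (s u : Dinf) :
    psi α t (s * u) = psi α t s * psi α t u := by
  have hsu : ∀ i, ((s * u : Dinf) : Equiv.Perm ℤ) i
      = (s : Equiv.Perm ℤ) ((u : Equiv.Perm ℤ) i) := fun i => rfl
  have hαα : α * α = 1 := by
    have := hconj 0
    simpa using this
  have swap : ∀ b : ℤ, α * t ^ b = t ^ (-b) * α := by
    intro b
    rw [← hconj b, mul_assoc (α * t ^ b) α α, hαα, mul_one]
  rcases dinf_classify s s.2 with hs | hs <;> rcases dinf_classify u u.2 with hu | hu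
  · -- both translations
    have h : ∀ i, ((s * u : Dinf) : Equiv.Perm ℤ) i
        = ((s * u : Dinf) : Equiv.Perm ℤ) 0 + i := by
      intro i
      rw [hsu i, hsu 0, hu i, hs ((u : Equiv.Perm ℤ) 0 + i), hs ((u : Equiv.Perm ℤ) 0)]
      ring
    have h0 : ((s * u : Dinf) : Equiv.Perm ℤ) 0
        = (s : Equiv.Perm ℤ) 0 + (u : Equiv.Perm ℤ) 0 := by
      rw [hsu 0, hs ((u : Equiv.Perm ℤ) 0)]
    rw [psi_trans _ _ _ h, psi_trans _ _ _ hs, psi_trans _ _ _ hu, h0, zpow_add]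
  · -- s translation, u reflection
    have h : ∀ i, ((s * u : Dinf) : Equiv.Perm ℤ) i
        = ((s * u : Dinf) : Equiv.Perm ℤ) 0 - i := by
      intro i
      rw [hsu i, hsu 0, hu i, hs ((u : Equiv.Perm ℤ) 0 - i), hs ((u : Equiv.Perm ℤ) 0)]
      ring
    have h0 : ((s * u : Dinf) : Equiv.Perm ℤ) 0
        = (s : Equiv.Perm ℤ) 0 + (u : Equiv.Perm ℤ) 0 := by
      rw [hsu 0, hs ((u : Equiv.Perm ℤ) 0)]
    rw [psi_refl _ _ _ h, psi_trans _ _ _ hs, psi_refl _ _ _ hu, h0, zpow_add, mul_assoc]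
  · -- s reflection, u translation
    have h : ∀ i, ((s * u : Dinf) : Equiv.Perm ℤ) i
        = ((s * u : Dinf) : Equiv.Perm ℤ) 0 - i := by
      intro i
      rw [hsu i, hsu 0, hu i, hs ((u : Equiv.Perm ℤ) 0 + i), hs ((u : Equiv.Perm ℤ) 0)]
      ring
    have h0 : ((s * u : Dinf) : Equiv.Perm ℤ) 0
        = (s : Equiv.Perm ℤ) 0 - (u : Equiv.Perm ℤ) 0 := by
      rw [hsu 0, hs ((u : Equiv.Perm ℤ) 0)]
    rw [psi_refl _ _ _ h, psi_refl _ _ _ hs, psi_trans _ _ _ hu, h0,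
      mul_assoc, swap, ← mul_assoc, ← zpow_add, ← sub_eq_add_neg]
  · -- both reflections
    have h : ∀ i, ((s * u : Dinf) : Equiv.Perm ℤ) i
        = ((s * u : Dinf) : Equiv.Perm ℤ) 0 + i := by
      intro i
      rw [hsu i, hsu 0, hu i, hs ((u : Equiv.Perm ℤ) 0 - i), hs ((u : Equiv.Perm ℤ) 0)]
      ring
    have h0 : ((s * u : Dinf) : Equiv.Perm ℤ) 0
        = (s : Equiv.Perm ℤ) 0 - (u : Equiv.Perm ℤ) 0 := by
      rw [hsu 0, hs ((u : Equiv.Perm ℤ) 0)]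
    rw [psi_trans _ _ _ h, psi_refl _ _ _ hs, psi_refl _ _ _ hu, h0,
      mul_assoc, ← mul_assoc α, hconj, ← zpow_add, ← sub_eq_add_neg]

end Psi

/-- An infinite group generated by two distinct nontrivial involutions is isomorphic to
the group `D∞` of distance-preserving permutations of `ℤ`. -/
theorem iso_dinf_of_involutions {G : Type*} [Group G] (α β : G)
    (hgen : Subgroup.closure ({α, β} : Set G) = ⊤)
    (hα : α ≠ 1) (hβ : β ≠ 1) (hαβ : α ≠ β)
    (hα2 : α ^ 2 = 1) (hβ2 : β ^ 2 = 1) (hinf : Infinite G) :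
    Nonempty (G ≃* Dinf) := by
  haveI := hinf
  set t : G := α * β with ht
  have hαα : α * α = 1 := by rw [← pow_two]; exact hα2
  have hββ : β * β = 1 := by rw [← pow_two]; exact hβ2
  have hαinv : α⁻¹ = α := inv_eq_of_mul_eq_one_right hαα
  have hβinv : β⁻¹ = β := inv_eq_of_mul_eq_one_right hββ
  have htinv : t⁻¹ = β * α := by rw [ht, mul_inv_rev, hαinv, hβinv]
  have hkey : α * t * α⁻¹ = t⁻¹ := by
    rw [hαinv, htinv, ht]
    calc α * (α * β) * α = (α * α) * (β * α) := by group
    _ = β * α := by rw [hαα, one_mul]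
  have hconj : ∀ n : ℤ, α * t ^ n * α = t ^ (-n) := by
    intro n
    have h := map_zpow (MulAut.conj α) t n
    simp only [MulAut.conj_apply, hkey] at h
    rw [hαinv, inv_zpow, ← zpow_neg] at h
    exact h
  -- the homomorphism
  let ψ : Dinf →* G :=
    { toFun := psi α t
      map_one' := psi_one α t
      map_mul' := psi_mul α t hconj }
  -- surjectivity
  have hψρ : ∀ c : ℤ, ψ ⟨Equiv.subLeft c, rho_mem c⟩ = t ^ c * α := by
    intro c
    have hre : ∀ i, ((⟨Equiv.subLeft c, rho_mem c⟩ : Dinf) : Equiv.Perm ℤ) i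
        = ((⟨Equiv.subLeft c, rho_mem c⟩ : Dinf) : Equiv.Perm ℤ) 0 - i := by
      intro i; show c - i = c - 0 - i; ring
    have h0 : ((⟨Equiv.subLeft c, rho_mem c⟩ : Dinf) : Equiv.Perm ℤ) 0 = c := by
      show c - 0 = c; ring
    show psi α t _ = _
    rw [psi_refl α t _ hre, h0]
  have hψα : ψ ⟨Equiv.subLeft 0, rho_mem 0⟩ = α := by
    rw [hψρ]; simp
  have hψβ : ψ ⟨Equiv.subLeft (-1), rho_mem (-1)⟩ = β := by
    rw [hψρ, zpow_neg, zpow_one, htinv, mul_assoc, hαα, mul_one]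
  have hsurj : Function.Surjective ψ := by
    intro g
    have hle : Subgroup.closure ({α, β} : Set G) ≤ ψ.range := by
      rw [Subgroup.closure_le]
      rintro x (rfl | rfl)
      · exact ⟨_, hψα⟩
      · exact ⟨_, hψβ⟩
    exact hle (by rw [hgen]; trivial)
  -- t has infinite order
  have tNotFin : ¬ IsOfFinOrder t := by
    intro hfin
    have hfz : (Subgroup.zpowers t : Set G).Finite := hfin.finite_zpowers
    have hsub : (Set.univ : Set G) ⊆
        (Subgroup.zpowers t : Set G) ∪ (· * α) '' (Subgroup.zpowers t : Set G) := by
      intro g _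
      obtain ⟨s, rfl⟩ := hsurj g
      show psi α t s ∈ _
      unfold psi
      split_ifs
      · exact Or.inl (Subgroup.zpow_mem_zpowers t _)
      · exact Or.inr ⟨_, Subgroup.zpow_mem_zpowers t _, rfl⟩
    have : Finite G := Set.finite_univ_iff.mp
      (Set.Finite.subset (hfz.union (hfz.image _)) hsub)
    exact not_finite G
  have tInj : Function.Injective (fun n : ℤ => t ^ n) :=
    injective_zpow_iff_not_isOfFinOrder.mpr tNotFin
  -- injectivity
  have hinj : Function.Injective ψ := by
    rw [injective_iff_map_eq_one]
    intro s h1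
    rcases dinf_classify s s.2 with hs | hs
    · rw [show ψ s = psi α t s from rfl, psi_trans α t s hs] at h1
      have hc : (s : Equiv.Perm ℤ) 0 = 0 :=
        tInj (a₁ := (s : Equiv.Perm ℤ) 0) (a₂ := 0) (by simpa using h1)
      have : (s : Equiv.Perm ℤ) = 1 := by
        ext i
        rw [hs i, hc]
        simp
      exact Subtype.ext this
    · exfalso
      rw [show ψ s = psi α t s from rfl, psi_refl α t s hs] at h1
      have hα1 : α = (t ^ ((s : Equiv.Perm ℤ) 0))⁻¹ := eq_inv_of_mul_eq_one_right h1
      have h2 := hconj 1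
      rw [hα1, ← zpow_neg, ← zpow_add, ← zpow_add] at h2
      have hcc := tInj h2
      have hc1 : (s : Equiv.Perm ℤ) 0 = 1 := by omega
      rw [hc1, zpow_one, htinv] at hα1
      exact hβ (mul_right_cancel (b := α) (by rw [one_mul, ← hα1]))
  exact ⟨(MulEquiv.ofBijective ψ ⟨hinj, hsurj⟩).symm⟩
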